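/- Let p be a prime, let Γ' be a linearly ordered abelian group, and let Γ be a subgroup of Γ' of finite index (with the induced order). Then Γ is p-antiregular if and only if Γ' is p-antiregular. -/

import Mathlib

/-!
Write `n` for the index of `Γ` in `Γ'`. Intersecting with `Γ` is an order isomorphism between the
convex subgroups of `Γ'` and those of `Γ`, with inverse `Δ ↦ {γ' | n • γ' ∈ Δ}`: the two are
inverse because convex subgroups are closed under division by positive integers. It preserves `⊤`,
hence quotients of rank one. For `p`-divisibility, write `n = p ^ a * u` with `p ∤ u`; since
`n • Γ' ⊆ Γ` and `Γ'/Δ'` is torsion-free, `p`-divisibility of either quotient gives `u • γ ≡ p • ε`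
modulo the convex subgroup for every `γ`, and a Bézout relation `c * p + d * u = 1` finishes.
-/

/-- A subgroup `Δ` of a linearly ordered abelian group `Γ` is convex if whenever
`0 ≤ β ≤ δ` and `δ ∈ Δ`, then `β ∈ Δ`. -/
def IsConvexAddSubgroup {Γ : Type*} [AddCommGroup Γ] [LinearOrder Γ] [IsOrderedAddMonoid Γ] (Δ : AddSubgroup Γ) : Prop :=
  ∀ β δ : Γ, 0 ≤ β → β ≤ δ → δ ∈ Δ → β ∈ Δ

/-- The quotient `Γ/Δ` of `Γ` by the (convex) subgroup `Δ` is `p`-divisible: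
for every `γ ∈ Γ` there are `ε ∈ Γ` and `δ ∈ Δ` with `γ = p • ε + δ`. -/
def QuotPDivisible {Γ : Type*} [AddCommGroup Γ] [LinearOrder Γ] [IsOrderedAddMonoid Γ] (p : ℕ) (Δ : AddSubgroup Γ) :
    Prop :=
  ∀ γ : Γ, ∃ ε : Γ, ∃ δ ∈ Δ, γ = p • ε + δ

/-- The quotient `Γ/Δ` has rank `1`: `Δ ≠ Γ` and there is no convex subgroup strictly
between `Δ` and `Γ`. -/
def QuotRankOne {Γ : Type*} [AddCommGroup Γ] [LinearOrder Γ] [IsOrderedAddMonoid Γ] (Δ : AddSubgroup Γ) : Prop :=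
  Δ ≠ ⊤ ∧ ∀ Δ' : AddSubgroup Γ, IsConvexAddSubgroup Δ' → Δ < Δ' → Δ' = ⊤

/-- A linearly ordered abelian group `Γ` is `p`-antiregular if `Γ/Δ` is not `p`-divisible for
every convex subgroup `Δ ≠ Γ`, and no quotient of `Γ` by a convex subgroup has rank `1`. -/
def IsPAntiregular (p : ℕ) (Γ : Type*) [AddCommGroup Γ] [LinearOrder Γ] [IsOrderedAddMonoid Γ] : Prop :=
  (∀ Δ : AddSubgroup Γ, IsConvexAddSubgroup Δ → Δ ≠ ⊤ → ¬ QuotPDivisible p Δ) ∧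
  (∀ Δ : AddSubgroup Γ, IsConvexAddSubgroup Δ → ¬ QuotRankOne Δ)

section OrderedGroup

variable {G : Type*} [AddCommGroup G] [LinearOrder G] [IsOrderedAddMonoid G] {Δ : AddSubgroup G}

lemma isConvexAddSubgroup_top : IsConvexAddSubgroup (⊤ : AddSubgroup G) :=
  fun _ _ _ _ _ => trivial

lemma IsConvexAddSubgroup.mem_of_nsmul_mem (hΔ : IsConvexAddSubgroup Δ) {k : ℕ} (hk : k ≠ 0)
    {γ : G} (h : k • γ ∈ Δ) : γ ∈ Δ := by
  have of_nonneg : ∀ x : G, 0 ≤ x → k • x ∈ Δ → x ∈ Δ := fun x hx hkx =>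
    hΔ x (k • x) hx (by simpa using nsmul_le_nsmul_left hx (Nat.one_le_iff_ne_zero.mpr hk)) hkx
  rcases le_total 0 γ with h0 | h0
  · exact of_nonneg γ h0 h
  · simpa using Δ.neg_mem (of_nonneg (-γ) (neg_nonneg.mpr h0) (by simpa using Δ.neg_mem h))

lemma QuotPDivisible.pow {p : ℕ} (h : QuotPDivisible p Δ) (k : ℕ) : QuotPDivisible (p ^ k) Δ := by
  induction k with
  | zero => exact fun γ => ⟨γ, 0, Δ.zero_mem, by simp⟩
  | succ k ih =>
    intro γ
    obtain ⟨ε, δ, hδ, rfl⟩ := ih γ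
    obtain ⟨ε₁, δ₁, hδ₁, rfl⟩ := h ε
    refine ⟨ε₁, p ^ k • δ₁ + δ, Δ.add_mem (Δ.nsmul_mem hδ₁ _) hδ, ?_⟩
    rw [smul_add, smul_smul, ← pow_succ]
    abel

lemma quotPDivisible_of_coprime {p u : ℕ} (hpu : p.Coprime u)
    (h : ∀ γ, ∃ ε, u • γ - p • ε ∈ Δ) : QuotPDivisible p Δ := by
  obtain ⟨c, d, hcd⟩ := Nat.isCoprime_iff_coprime.mpr hpu
  intro γ
  obtain ⟨ε, hε⟩ := h γ
  refine ⟨c • γ + d • ε, d • (u • γ - p • ε), Δ.zsmul_mem hε d, ?_⟩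
  match_scalars
  · linear_combination -hcd
  · ring

end OrderedGroup

section ConvexExtension

variable {Γ' : Type*} [AddCommGroup Γ'] {Γ : AddSubgroup Γ'} {Δ : AddSubgroup Γ}

/-- For convex `Δ` and `Γ` of finite index, the convex subgroup of `Γ'` whose trace on `Γ` is `Δ`. -/
noncomputable def AddSubgroup.convexExtension (Γ : AddSubgroup Γ') (Δ : AddSubgroup Γ) :
    AddSubgroup Γ' :=
  (Δ.map Γ.subtype).comap (nsmulAddMonoidHom Γ.index)

lemma AddSubgroup.mem_convexExtension {γ' : Γ'} :
    γ' ∈ Γ.convexExtension Δ ↔ (⟨Γ.index • γ', Γ.nsmul_index_mem γ'⟩ : Γ) ∈ Δ := by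
  simp [AddSubgroup.convexExtension, Γ.nsmul_index_mem]

lemma AddSubgroup.convexExtension_mono {Δ₁ Δ₂ : AddSubgroup Γ} (h : Δ₁ ≤ Δ₂) :
    Γ.convexExtension Δ₁ ≤ Γ.convexExtension Δ₂ :=
  AddSubgroup.comap_mono (AddSubgroup.map_mono h)

end ConvexExtension

section FiniteIndex

variable {Γ' : Type*} [AddCommGroup Γ'] [LinearOrder Γ'] [IsOrderedAddMonoid Γ']
  {Γ : AddSubgroup Γ'} {Δ' Δ'' : AddSubgroup Γ'} {Δ : AddSubgroup Γ}

lemma IsConvexAddSubgroup.comap_subtype (hΔ' : IsConvexAddSubgroup Δ') :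
    IsConvexAddSubgroup (Δ'.comap Γ.subtype) :=
  fun β δ h0 hle hδ => hΔ' β δ h0 hle hδ

lemma IsConvexAddSubgroup.convexExtension (hΔ : IsConvexAddSubgroup Δ) :
    IsConvexAddSubgroup (Γ.convexExtension Δ) := by
  intro β δ h0 hle hδ
  rw [AddSubgroup.mem_convexExtension] at hδ ⊢
  exact hΔ _ _ (Subtype.coe_le_coe.mp (nsmul_nonneg h0 _))
    (Subtype.coe_le_coe.mp (nsmul_le_nsmul_right hle _)) hδ

lemma AddSubgroup.comap_convexExtension (hfin : Γ.index ≠ 0) (hΔ : IsConvexAddSubgroup Δ) :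
    (Γ.convexExtension Δ).comap Γ.subtype = Δ := by
  ext γ
  have hγ : (⟨Γ.index • (γ : Γ'), Γ.nsmul_index_mem γ⟩ : Γ) = Γ.index • γ := rfl
  rw [AddSubgroup.mem_comap, AddSubgroup.coe_subtype, AddSubgroup.mem_convexExtension, hγ]
  exact ⟨hΔ.mem_of_nsmul_mem hfin, fun h => Δ.nsmul_mem h _⟩

lemma AddSubgroup.convexExtension_comap (hfin : Γ.index ≠ 0) (hΔ' : IsConvexAddSubgroup Δ') :
    Γ.convexExtension (Δ'.comap Γ.subtype) = Δ' := by
  ext γ'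
  rw [AddSubgroup.mem_convexExtension, AddSubgroup.mem_comap]
  exact ⟨hΔ'.mem_of_nsmul_mem hfin, fun h => Δ'.nsmul_mem h _⟩

lemma exists_isConvexAddSubgroup_comap_eq (hfin : Γ.index ≠ 0) (hΔ : IsConvexAddSubgroup Δ) :
    ∃ Δ' : AddSubgroup Γ', IsConvexAddSubgroup Δ' ∧ Δ'.comap Γ.subtype = Δ :=
  ⟨_, hΔ.convexExtension, AddSubgroup.comap_convexExtension hfin hΔ⟩

lemma forall_isConvexAddSubgroup_iff_comap (hfin : Γ.index ≠ 0) {P : AddSubgroup Γ → Prop} :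
    (∀ Δ, IsConvexAddSubgroup Δ → P Δ) ↔
      ∀ Δ' : AddSubgroup Γ', IsConvexAddSubgroup Δ' → P (Δ'.comap Γ.subtype) := by
  refine ⟨fun h Δ' hΔ' => h _ hΔ'.comap_subtype, fun h Δ hΔ => ?_⟩
  obtain ⟨Δ', hΔ', rfl⟩ := exists_isConvexAddSubgroup_comap_eq hfin hΔ
  exact h Δ' hΔ'

lemma comap_subtype_le_comap_subtype_iff (hfin : Γ.index ≠ 0) (hΔ' : IsConvexAddSubgroup Δ')
    (hΔ'' : IsConvexAddSubgroup Δ'') :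
    Δ'.comap Γ.subtype ≤ Δ''.comap Γ.subtype ↔ Δ' ≤ Δ'' := by
  refine ⟨fun h => ?_, AddSubgroup.comap_mono⟩
  rw [← AddSubgroup.convexExtension_comap hfin hΔ', ← AddSubgroup.convexExtension_comap hfin hΔ'']
  exact AddSubgroup.convexExtension_mono h

lemma comap_subtype_lt_comap_subtype_iff (hfin : Γ.index ≠ 0) (hΔ' : IsConvexAddSubgroup Δ')
    (hΔ'' : IsConvexAddSubgroup Δ'') :
    Δ'.comap Γ.subtype < Δ''.comap Γ.subtype ↔ Δ' < Δ'' := by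
  simp only [lt_iff_le_not_ge, comap_subtype_le_comap_subtype_iff hfin hΔ' hΔ'',
    comap_subtype_le_comap_subtype_iff hfin hΔ'' hΔ']

lemma comap_subtype_eq_top_iff (hfin : Γ.index ≠ 0) (hΔ' : IsConvexAddSubgroup Δ') :
    Δ'.comap Γ.subtype = ⊤ ↔ Δ' = ⊤ := by
  rw [← AddSubgroup.comap_top Γ.subtype, le_antisymm_iff, le_antisymm_iff,
    comap_subtype_le_comap_subtype_iff hfin hΔ' isConvexAddSubgroup_top,
    comap_subtype_le_comap_subtype_iff hfin isConvexAddSubgroup_top hΔ']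

lemma quotRankOne_comap_subtype_iff (hfin : Γ.index ≠ 0) (hΔ' : IsConvexAddSubgroup Δ') :
    QuotRankOne (Δ'.comap Γ.subtype) ↔ QuotRankOne Δ' := by
  unfold QuotRankOne
  rw [ne_eq, ne_eq, comap_subtype_eq_top_iff hfin hΔ', forall_isConvexAddSubgroup_iff_comap hfin]
  refine and_congr_right fun _ => forall₂_congr fun Δ'' hΔ'' => ?_
  rw [comap_subtype_lt_comap_subtype_iff hfin hΔ' hΔ'', comap_subtype_eq_top_iff hfin hΔ'']

variable {p : ℕ}

lemma QuotPDivisible.comap_subtype (hp : p.Prime) (hfin : Γ.index ≠ 0)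
    (h : QuotPDivisible p Δ') : QuotPDivisible p (Δ'.comap Γ.subtype) := by
  obtain ⟨a, u, hpu, hn⟩ := Nat.exists_eq_pow_mul_and_not_dvd hfin p hp.ne_one
  refine quotPDivisible_of_coprime ((hp.coprime_iff_not_dvd).mpr hpu) fun γ => ?_
  obtain ⟨ε', δ', hδ', hγ⟩ := h.pow (a + 1) γ
  refine ⟨⟨Γ.index • ε', Γ.nsmul_index_mem ε'⟩, ?_⟩
  have hu : u • (γ : Γ') - p • Γ.index • ε' = u • δ' := by
    rw [hγ, hn]
    module
  rw [AddSubgroup.mem_comap]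
  simpa [hu] using Δ'.nsmul_mem hδ' u

lemma QuotPDivisible.of_comap_subtype (hp : p.Prime) (hfin : Γ.index ≠ 0)
    (hΔ' : IsConvexAddSubgroup Δ') (h : QuotPDivisible p (Δ'.comap Γ.subtype)) :
    QuotPDivisible p Δ' := by
  obtain ⟨a, u, hpu, hn⟩ := Nat.exists_eq_pow_mul_and_not_dvd hfin p hp.ne_one
  refine quotPDivisible_of_coprime ((hp.coprime_iff_not_dvd).mpr hpu) fun γ' => ?_
  obtain ⟨ε, δ, hδ, hγ⟩ := h.pow (a + 1) ⟨Γ.index • γ', Γ.nsmul_index_mem γ'⟩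
  refine ⟨ε, hΔ'.mem_of_nsmul_mem (pow_ne_zero a hp.ne_zero) ?_⟩
  have hγ' : Γ.index • γ' = p ^ (a + 1) • (ε : Γ') + δ := congrArg Subtype.val hγ
  have hδ' : p ^ a • (u • γ' - p • (ε : Γ')) = δ := by
    rw [eq_sub_of_add_eq' hγ'.symm, hn]
    module
  rwa [hδ']

lemma quotPDivisible_comap_subtype_iff (hp : p.Prime) (hfin : Γ.index ≠ 0)
    (hΔ' : IsConvexAddSubgroup Δ') :
    QuotPDivisible p (Δ'.comap Γ.subtype) ↔ QuotPDivisible p Δ' :=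
  ⟨QuotPDivisible.of_comap_subtype hp hfin hΔ', QuotPDivisible.comap_subtype hp hfin⟩

end FiniteIndex

/-- Lemma: `p`-antiregularity passes to/from finite-index subgroups.
Let `p` be a prime, `Γ'` a linearly ordered abelian group and `Γ ≤ Γ'` a subgroup of finite
index (with the induced order). Then `Γ` is `p`-antiregular iff `Γ'` is `p`-antiregular. -/
theorem pAntiregular_iff_of_finite_index (p : ℕ) (hp : p.Prime)
    (Γ' : Type*) [AddCommGroup Γ'] [LinearOrder Γ'] [IsOrderedAddMonoid Γ']
    (Γ : AddSubgroup Γ') (hfin : Γ.index ≠ 0) :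
    IsPAntiregular p Γ ↔ IsPAntiregular p Γ' := by
  unfold IsPAntiregular
  rw [forall_isConvexAddSubgroup_iff_comap hfin, forall_isConvexAddSubgroup_iff_comap hfin]
  refine and_congr (forall₂_congr fun Δ' hΔ' => ?_) (forall₂_congr fun Δ' hΔ' => ?_)
  · rw [ne_eq, ne_eq, comap_subtype_eq_top_iff hfin hΔ',
      quotPDivisible_comap_subtype_iff hp hfin hΔ']
  · rw [quotRankOne_comap_subtype_iff hfin hΔ']
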